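/- Let κ > 0, φ > 0 and ν > 0. Then for every h ∈ ℝ² with h ≠ 0 and every i ∈ {1,2}, the Matérn covariance function C_κ^ν on ℝ² is partially differentiable at h and ∂C_κ^ν/∂h_i (h) = −(h_i/(2ν))·C_κ^{ν−1}(h). (This is the derivative relation used in the paper's recipe for computing covariance functions of nested SPDE fields in ℝ², expressing the derivative of a Matérn covariance function via a Matérn covariance with shape parameter lowered by one.) -/

import Mathlib

open Real

/-- The modified Bessel function of the second kind,
`K_ν(x) = ∫₀^∞ exp(−x cosh t) cosh(νt) dt`. -/
noncomputable def besselK (ν x : ℝ) : ℝ :=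
  ∫ t in Set.Ioi (0 : ℝ), Real.exp (-x * Real.cosh t) * Real.cosh (ν * t)

/-- The Matérn covariance function on `ℝ²` with scale `κ`, variance parameter `φ²` and
shape parameter `ν`:
`C_κ^ν(h) = (2^{1−ν}φ²/(4π Γ(ν+1) κ^{2ν})) (κ‖h‖)^ν K_ν(κ‖h‖)`. -/
noncomputable def matern (κ φ ν : ℝ) (h : EuclideanSpace ℝ (Fin 2)) : ℝ :=
  2 ^ (1 - ν) * φ ^ 2 / (4 * π * Real.Gamma (ν + 1) * κ ^ (2 * ν)) *
    (κ * ‖h‖) ^ ν * besselK ν (κ * ‖h‖)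

/-- The partial derivative of `g : ℝ² → ℝ` in the `i`-th coordinate direction. -/
noncomputable def pderiv2 (i : Fin 2) (g : EuclideanSpace ℝ (Fin 2) → ℝ) :
    EuclideanSpace ℝ (Fin 2) → ℝ :=
  fun x => fderiv ℝ g x (EuclideanSpace.single i 1)

/-!
Differentiating under the integral sign gives `K_ν' = -(K_{ν+1} + K_{ν-1})/2`, and integrating
`d/dt [exp (-x cosh t) sinh (νt)]` over `(0, ∞)` gives the recurrence
`K_{ν+1}(x) - K_{ν-1}(x) = (2ν/x) K_ν(x)`. Together they yield `(x^ν K_ν(x))' = -x^ν K_{ν-1}(x)`,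
so the radial profile `r ↦ C_κ^ν` satisfies `d/dr C_κ^ν = -(r/(2ν)) C_κ^{ν-1}`, the factor
`2νκ²` being exactly the ratio of the two normalising constants. The chain rule with
`∂‖h‖/∂h_i = h_i/‖h‖` finishes the proof.
-/

open MeasureTheory Filter Set Topology Asymptotics
open scoped InnerProductSpace

section BesselK

variable {x : ℝ}

lemma cosh_mul_le_exp_abs_mul (ν : ℝ) {t : ℝ} (ht : 0 ≤ t) : cosh (ν * t) ≤ exp (|ν| * t) := by
  rw [← cosh_abs, abs_mul, abs_of_nonneg ht, cosh_eq]
  linarith [exp_le_exp.2 (neg_le_self (by positivity : 0 ≤ |ν| * t))]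

lemma abs_sinh_le_cosh (y : ℝ) : |sinh y| ≤ cosh y := by
  rw [abs_sinh, ← cosh_abs y]
  exact (sinh_lt_cosh _).le

lemma tendsto_exp_neg_mul_cosh_mul_exp_mul (a : ℝ) (hx : 0 < x) :
    Tendsto (fun t => exp (-x * cosh t) * exp (a * t)) atTop (𝓝 0) := by
  have hdecay : Tendsto (fun t => exp t ^ a * exp (-(x / 2) * exp t)) atTop (𝓝 0) :=
    (tendsto_rpow_mul_exp_neg_mul_atTop_nhds_zero a _ (half_pos hx)).comp tendsto_exp_atTop
  refine squeeze_zero (fun t => by positivity) (fun t => ?_) hdecay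
  have hcosh : exp t / 2 ≤ cosh t := by rw [cosh_eq]; linarith [exp_pos (-t)]
  calc exp (-x * cosh t) * exp (a * t) = exp t ^ a * exp (-x * cosh t) := by
        rw [mul_comm a t, exp_mul t a, mul_comm]
    _ ≤ exp t ^ a * exp (-(x / 2) * exp t) := by
        gcongr exp t ^ a * exp ?_
        nlinarith

lemma integrableOn_besselK_integrand (ν : ℝ) (hx : 0 < x) :
    IntegrableOn (fun t => exp (-x * cosh t) * cosh (ν * t)) (Ioi 0) := by
  refine integrable_of_isBigO_exp_neg one_pos (by fun_prop) (IsBigO.of_bound 1 ?_)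
  filter_upwards [eventually_ge_atTop 0,
    (tendsto_exp_neg_mul_cosh_mul_exp_mul (|ν| + 1) hx).eventually_le_const one_pos] with t ht hle
  rw [norm_of_nonneg (by positivity), norm_of_nonneg (exp_pos _).le, one_mul]
  calc exp (-x * cosh t) * cosh (ν * t) ≤ exp (-x * cosh t) * exp (|ν| * t) := by
        gcongr; exact cosh_mul_le_exp_abs_mul ν ht
    _ = exp (-x * cosh t) * exp ((|ν| + 1) * t) * exp (-1 * t) := by
        simp only [← exp_add]; ring_nf
    _ ≤ exp (-1 * t) := mul_le_of_le_one_left (exp_pos _).le hle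

lemma cosh_mul_besselK_integrand (ν x t : ℝ) :
    cosh t * (exp (-x * cosh t) * cosh (ν * t)) =
      (exp (-x * cosh t) * cosh ((ν + 1) * t) + exp (-x * cosh t) * cosh ((ν - 1) * t)) / 2 := by
  rw [add_mul, sub_mul, one_mul, cosh_add, cosh_sub]
  ring

lemma integrableOn_cosh_mul_besselK_integrand (ν : ℝ) (hx : 0 < x) :
    IntegrableOn (fun t => cosh t * (exp (-x * cosh t) * cosh (ν * t))) (Ioi 0) := by
  simp only [cosh_mul_besselK_integrand]
  exact ((integrableOn_besselK_integrand (ν + 1) hx).add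
    (integrableOn_besselK_integrand (ν - 1) hx)).div_const 2

lemma integral_cosh_mul_besselK_integrand (ν : ℝ) (hx : 0 < x) :
    ∫ t in Ioi 0, cosh t * (exp (-x * cosh t) * cosh (ν * t)) =
      (besselK (ν + 1) x + besselK (ν - 1) x) / 2 := by
  simp only [cosh_mul_besselK_integrand]
  rw [integral_div, integral_add (integrableOn_besselK_integrand (ν + 1) hx)
    (integrableOn_besselK_integrand (ν - 1) hx)]
  rfl

lemma hasDerivAt_besselK (ν : ℝ) (hx : 0 < x) :
    HasDerivAt (besselK ν) (-((besselK (ν + 1) x + besselK (ν - 1) x) / 2)) x := by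
  have hderiv := hasDerivAt_integral_of_dominated_loc_of_deriv_le (μ := volume.restrict (Ioi 0))
    (F := fun y t => exp (-y * cosh t) * cosh (ν * t))
    (F' := fun y t => -(cosh t * (exp (-y * cosh t) * cosh (ν * t))))
    (bound := fun t => cosh t * (exp (-(x / 2) * cosh t) * cosh (ν * t)))
    (Ioi_mem_nhds (half_lt_self hx)) (Eventually.of_forall fun y => by fun_prop)
    (integrableOn_besselK_integrand ν hx) (by fun_prop) ?bound
    (integrableOn_cosh_mul_besselK_integrand ν (half_pos hx)) ?deriv
  · rw [integral_neg, integral_cosh_mul_besselK_integrand ν hx] at hderiv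
    exact hderiv.2
  case bound =>
    refine ae_of_all _ fun t y (hy : x / 2 < y) => ?_
    rw [norm_neg, norm_of_nonneg (by positivity)]
    gcongr _ * (exp ?_ * _)
    nlinarith [one_le_cosh t]
  case deriv =>
    refine ae_of_all _ fun t y _ => ?_
    refine (((hasDerivAt_neg' y).mul_const (cosh t)).exp.mul_const
      (cosh (ν * t))).congr_deriv ?_
    ring

lemma tendsto_besselK_sinh_integrand (ν : ℝ) (hx : 0 < x) :
    Tendsto (fun t => exp (-x * cosh t) * sinh (ν * t)) atTop (𝓝 0) := by
  refine squeeze_zero_norm' ?_ (tendsto_exp_neg_mul_cosh_mul_exp_mul |ν| hx)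
  filter_upwards [eventually_ge_atTop 0] with t ht
  rw [norm_mul, norm_of_nonneg (exp_pos _).le, norm_eq_abs]
  gcongr
  exact (abs_sinh_le_cosh _).trans (cosh_mul_le_exp_abs_mul ν ht)

lemma hasDerivAt_besselK_sinh_integrand (ν x t : ℝ) :
    HasDerivAt (fun t => exp (-x * cosh t) * sinh (ν * t))
      (ν * (exp (-x * cosh t) * cosh (ν * t)) - x / 2 *
        (exp (-x * cosh t) * cosh ((ν + 1) * t) - exp (-x * cosh t) * cosh ((ν - 1) * t))) t := by
  refine (((hasDerivAt_cosh t).const_mul (-x)).exp.mul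
    ((hasDerivAt_id' t).const_mul ν).sinh).congr_deriv ?_
  rw [add_mul, sub_mul, one_mul, cosh_add, cosh_sub]
  ring

lemma besselK_add_one_sub_besselK_sub_one (ν : ℝ) (hx : 0 < x) :
    besselK (ν + 1) x - besselK (ν - 1) x = 2 * ν / x * besselK ν x := by
  have hK (μ : ℝ) := integrableOn_besselK_integrand μ hx
  have hKν := (hK ν).const_mul ν
  have hKdiff : IntegrableOn (fun t => x / 2 *
      (exp (-x * cosh t) * cosh ((ν + 1) * t) - exp (-x * cosh t) * cosh ((ν - 1) * t))) (Ioi 0) :=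
    ((hK (ν + 1)).sub (hK (ν - 1))).const_mul (x / 2)
  have hFTC := integral_Ioi_of_hasDerivAt_of_tendsto (by fun_prop : Continuous _).continuousWithinAt
    (fun t _ => hasDerivAt_besselK_sinh_integrand ν x t) (hKν.sub hKdiff)
    (tendsto_besselK_sinh_integrand ν hx)
  rw [integral_sub hKν hKdiff, integral_const_mul, integral_const_mul,
    integral_sub (hK _) (hK _)] at hFTC
  have hrec : ν * besselK ν x - x / 2 * (besselK (ν + 1) x - besselK (ν - 1) x) = 0 := by
    simpa [besselK] using hFTC
  field_simp
  linarith

lemma hasDerivAt_rpow_mul_besselK (ν : ℝ) (hx : 0 < x) :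
    HasDerivAt (fun y => y ^ ν * besselK ν y) (-(x ^ ν * besselK (ν - 1) x)) x := by
  refine ((hasDerivAt_rpow_const (Or.inl hx.ne')).mul (hasDerivAt_besselK ν hx)).congr_deriv ?_
  rw [rpow_sub_one hx.ne']
  linear_combination (-(x ^ ν) / 2) * besselK_add_one_sub_besselK_sub_one ν hx

end BesselK

lemma HasDerivAt.norm {F : Type*} [NormedAddCommGroup F] [InnerProductSpace ℝ F] {f : ℝ → F}
    {f' : F} {t : ℝ} (hf : HasDerivAt f f' t) (h0 : f t ≠ 0) :
    HasDerivAt (fun s => ‖f s‖) (⟪f t, f'⟫_ℝ / ‖f t‖) t := by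
  have hsqrt := hf.norm_sq.sqrt (by positivity)
  simp only [sqrt_sq (norm_nonneg _)] at hsqrt
  rwa [mul_div_mul_left _ _ two_ne_zero] at hsqrt

noncomputable def maternProfile (κ φ ν r : ℝ) : ℝ :=
  2 ^ (1 - ν) * φ ^ 2 / (4 * π * Real.Gamma (ν + 1) * κ ^ (2 * ν)) * (κ * r) ^ ν *
    besselK ν (κ * r)

lemma matern_eq_maternProfile (κ φ ν : ℝ) (h : EuclideanSpace ℝ (Fin 2)) :
    matern κ φ ν h = maternProfile κ φ ν ‖h‖ :=
  rfl

lemma hasDerivAt_maternProfile (φ : ℝ) {κ ν r : ℝ} (hκ : 0 < κ) (hν : 0 < ν) (hr : 0 < r) :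
    HasDerivAt (maternProfile κ φ ν) (-(r / (2 * ν)) * maternProfile κ φ (ν - 1) r) r := by
  have hκr : 0 < κ * r := mul_pos hκ hr
  have hG := ((hasDerivAt_rpow_mul_besselK ν hκr).comp r ((hasDerivAt_id' r).const_mul κ)).const_mul
    (2 ^ (1 - ν) * φ ^ 2 / (4 * π * Real.Gamma (ν + 1) * κ ^ (2 * ν)))
  refine (hG.congr_of_eventuallyEq (Eventually.of_forall fun y => ?_)).congr_deriv ?_
  · simp only [maternProfile, Function.comp_apply]
    ring
  have h2 : (2 : ℝ) ^ (1 - (ν - 1)) = 2 ^ (1 - ν) * 2 := by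
    rw [← rpow_add_one two_ne_zero]; ring_nf
  have hκ2 : κ ^ (2 * ν) = κ ^ (2 * (ν - 1)) * κ ^ 2 := by
    rw [← rpow_natCast, ← rpow_add hκ]; push_cast; ring_nf
  unfold maternProfile
  rw [sub_add_cancel, Gamma_add_one hν.ne', h2, hκ2, rpow_sub_one hκr.ne']
  have := (Gamma_pos_of_pos hν).ne'
  have := (rpow_pos_of_pos hκ (2 * (ν - 1))).ne'
  field_simp

theorem matern_deriv_general (κ φ ν : ℝ) (hκ : 0 < κ) (hν : 0 < ν)
    (h : EuclideanSpace ℝ (Fin 2)) (hh : h ≠ 0) (i : Fin 2) :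
    HasDerivAt (fun t : ℝ => matern κ φ ν (h + t • EuclideanSpace.single i 1))
      (-(h i / (2 * ν)) * matern κ φ (ν - 1) h) 0 := by
  have hline : HasDerivAt (fun t : ℝ => h + t • EuclideanSpace.single i (1 : ℝ))
      (EuclideanSpace.single i 1) 0 := by
    simpa using ((hasDerivAt_id' (0 : ℝ)).smul_const (EuclideanSpace.single i (1 : ℝ))).const_add h
  have hnorm := hline.norm (by simpa using hh)
  simp only [zero_smul, add_zero, EuclideanSpace.inner_single_right, one_mul, conj_trivial]
    at hnorm
  have hprofile := hasDerivAt_maternProfile φ hκ hν (norm_pos_iff.2 hh)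
  refine (hprofile.comp_of_eq 0 hnorm (by simp)).congr_deriv ?_
  rw [matern_eq_maternProfile]
  field_simp

/-- The Matérn covariance function on `ℝ²` is partially differentiable at every `h ≠ 0`, with
`∂C_κ^ν/∂h_i (h) = −(h_i/(2ν))·C_κ^{ν−1}(h)`. -/
theorem matern_deriv (κ φ ν : ℝ) (hκ : 0 < κ) (hφ : 0 < φ) (hν : 0 < ν)
    (h : EuclideanSpace ℝ (Fin 2)) (hh : h ≠ 0) (i : Fin 2) :
    HasDerivAt (fun t : ℝ => matern κ φ ν (h + t • EuclideanSpace.single i 1))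
      (-(h i / (2 * ν)) * matern κ φ (ν - 1) h) 0 :=
  matern_deriv_general κ φ ν hκ hν h hh i
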